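/- The Diophantine equation x^2 = 12^n + 25029865 has exactly three solutions in positive integers (x,n), namely (5003, 2), (5293, 6), (21331, 8). -/

import Mathlib

/-!
For odd `n` the equation has no solution modulo `13`: there `12 ≡ -1`, so `x ^ 2 ≡ 2`, which is not
a square mod `13`. For even `n = 2 * m` write `y = 12 ^ m`; then `(x - y) * (x + y) = 25029865`,
so `2 * y + 1 ≤ 25029865`, which leaves `m ≤ 6`, and each of these cases is decided by computing
an integer square root.
-/

lemma sq_eq_iff_eq_sqrt {x N : ℕ} : x ^ 2 = N ↔ x = Nat.sqrt N ∧ Nat.sqrt N ^ 2 = N := by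
  constructor
  · rintro rfl
    rw [Nat.sqrt_eq']
    exact ⟨rfl, rfl⟩
  · rintro ⟨rfl, h⟩
    exact h

lemma two_mul_add_one_le_of_sq_eq_sq_add {x y c : ℕ} (hc : 0 < c) (h : x ^ 2 = y ^ 2 + c) :
    2 * y + 1 ≤ c := by
  have hyx : y < x := (Nat.pow_lt_pow_iff_left two_ne_zero).mp (by omega)
  have hsq : (y + 1) ^ 2 ≤ x ^ 2 := Nat.pow_le_pow_left hyx 2
  nlinarith

lemma sq_ne_twelve_pow_add_of_odd {x n : ℕ} (hn : Odd n) : x ^ 2 ≠ 12 ^ n + 25029865 := by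
  intro h
  have h13 : (x : ZMod 13) ^ 2 = 2 := by
    have := congrArg (Nat.cast : ℕ → ZMod 13) h
    push_cast at this
    rw [this, show (12 : ZMod 13) = -1 from rfl, hn.neg_one_pow]
    decide
  generalize (x : ZMod 13) = y at h13
  revert y
  decide

lemma sq_eq_twelve_pow_add_of_even {x m : ℕ} (h : x ^ 2 = 12 ^ (2 * m) + 25029865) :
    (x, 2 * m) = (5003, 2) ∨ (x, 2 * m) = (5293, 6) ∨ (x, 2 * m) = (21331, 8) := by
  have hbound : 2 * 12 ^ m + 1 ≤ 25029865 :=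
    two_mul_add_one_le_of_sq_eq_sq_add (by norm_num) (by rw [h, pow_mul'])
  have hm : m ≤ 6 := by
    by_contra! hm
    have : 12 ^ 7 ≤ 12 ^ m := Nat.pow_le_pow_right (by norm_num) hm
    omega
  interval_cases m <;> norm_num [sq_eq_iff_eq_sqrt] at h <;> simp [h]

theorem stmt_15_general (x n : ℕ) :
    x^2 = 12^n + 25029865 ↔
      (x, n) = (5003, 2) ∨ (x, n) = (5293, 6) ∨ (x, n) = (21331, 8) := by
  constructor
  · intro h
    rcases Nat.even_or_odd n with heven | hodd
    · obtain ⟨m, rfl⟩ := even_iff_two_dvd.mp heven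
      exact sq_eq_twelve_pow_add_of_even h
    · exact absurd h (sq_ne_twelve_pow_add_of_odd hodd)
  · rintro (h | h | h) <;> obtain ⟨rfl, rfl⟩ := Prod.mk_inj.mp h <;> norm_num

theorem stmt_15 (x n : ℕ) (hx : 0 < x) (hn : 0 < n) :
    x^2 = 12^n + 25029865 ↔
      (x, n) = (5003, 2) ∨ (x, n) = (5293, 6) ∨ (x, n) = (21331, 8) :=
  stmt_15_general x n
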